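/- arXiv:0810.0906 — 5 statements merged into one kernel-verified Lean document; each statement's English description precedes it below -/
import Mathlib

section
/- Let G be a graph with maximum degree Δ and let f be an L(2,1)-labeling of G using only labels in {0, 1, …, Δ+1}. Then every vertex v of degree Δ satisfies f(v) = 0 or f(v) = Δ+1. -/
def IsL21Labeling {V : Type*} (G : SimpleGraph V) (f : V → ℕ) : Prop :=
  (∀ x y, G.Adj x y → 2 ≤ |(f x : ℤ) - (f y : ℤ)|) ∧
  (∀ x y, G.dist x y = 2 → 1 ≤ |(f x : ℤ) - (f y : ℤ)|)

/-!
If `f v = k` with `1 ≤ k ≤ Δ`, the neighbours of `v` must avoid the three labels `k - 1, k, k + 1`,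
all of which lie in `{0, …, Δ + 1}`; since neighbours of `v` are pairwise at distance at most 2
their labels are distinct, so `Δ = deg v ≤ (Δ + 2) - 3`, which is absurd.
-/

namespace SimpleGraph

variable {V : Type*} {G : SimpleGraph V}

lemma dist_eq_two_of_adj_of_adj {u v w : V} (hu : G.Adj v u) (hw : G.Adj v w) (huw : u ≠ w)
    (hnadj : ¬G.Adj u w) : G.dist u w = 2 := by
  have hcommon : (G.commonNeighbors u w).Nonempty :=
    ⟨v, (G.mem_commonNeighbors).mpr ⟨hu.symm, hw.symm⟩⟩
  rw [dist, edist_eq_two_iff.mpr ⟨huw, hnadj, hcommon⟩]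
  rfl

end SimpleGraph

namespace IsL21Labeling

open Finset SimpleGraph

variable {V : Type*} {G : SimpleGraph V} {f : V → ℕ}

lemma label_notMem_Icc_of_adj (hf : IsL21Labeling G f) {u v : V} (h : G.Adj v u) :
    f u ∉ Icc (f v - 1) (f v + 1) := by
  have := hf.1 v u h
  rw [mem_Icc]
  rcases abs_cases ((f v : ℤ) - f u) with ⟨_, _⟩ | ⟨_, _⟩ <;> omega

lemma injOn_neighborSet (hf : IsL21Labeling G f) (v : V) : Set.InjOn f (G.neighborSet v) := by
  intro u hu w hw hfuw
  by_contra huw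
  by_cases hadj : G.Adj u w
  · simpa [hfuw] using hf.1 u w hadj
  · simpa [hfuw] using hf.2 u w (dist_eq_two_of_adj_of_adj hu hw huw hadj)

lemma degree_le_card_sdiff_Icc [Fintype V] [DecidableRel G.Adj] (hf : IsL21Labeling G f)
    {B : ℕ} (hb : ∀ u, f u ≤ B) (v : V) :
    G.degree v ≤ #(range (B + 1) \ Icc (f v - 1) (f v + 1)) := by
  rw [← card_neighborFinset_eq_degree]
  refine card_le_card_of_injOn f (fun u hu => ?_) (by simpa using hf.injOn_neighborSet v)
  rw [mem_coe, mem_neighborFinset] at hu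
  exact mem_sdiff.mpr ⟨mem_range.mpr (Nat.lt_succ_of_le (hb u)), hf.label_notMem_Icc_of_adj hu⟩

end IsL21Labeling

namespace Finset

lemma card_range_sdiff_Icc {k B : ℕ} (hk : 1 ≤ k) (hkB : k + 1 ≤ B) :
    #(range (B + 1) \ Icc (k - 1) (k + 1)) = B - 2 := by
  have hsub : Icc (k - 1) (k + 1) ⊆ range (B + 1) := fun x hx => by
    rw [mem_Icc] at hx
    rw [mem_range]
    omega
  rw [card_sdiff_of_subset hsub, card_range, Nat.card_Icc]
  omega

end Finset

theorem stmt1 {V : Type*} [Fintype V] (G : SimpleGraph V) [DecidableRel G.Adj]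
    (f : V → ℕ) (hf : IsL21Labeling G f)
    (hb : ∀ v, f v ≤ G.maxDegree + 1)
    (v : V) (hv : G.degree v = G.maxDegree) :
    f v = 0 ∨ f v = G.maxDegree + 1 := by
  by_contra! hmid
  have hfv := hb v
  have hdeg := hf.degree_le_card_sdiff_Icc hb v
  rw [Finset.card_range_sdiff_Icc (by omega) (by omega)] at hdeg
  omega
end

section
/- Let G be a graph with maximum degree Δ ≥ 2 admitting an L(2,1)-labeling with labels in {0, 1, …, Δ+1}. Then for every vertex v of G, the closed neighborhood N[v] contains at most two major vertices (vertices of degree Δ). -/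
/-- Two distinct vertices in a closed neighborhood get different labels. -/
lemma labels_ne {V : Type*} (G : SimpleGraph V) (f : V → ℕ) (hf : IsL21Labeling G f)
    {v x y : V} (hx : x = v ∨ G.Adj v x) (hy : y = v ∨ G.Adj v y) (hxy : x ≠ y) :
    f x ≠ f y := by
  have key : ∀ a b : V, G.Adj a b → f a ≠ f b := by
    intro a b hab heq
    have := hf.1 a b hab
    rw [heq] at this
    simp at this
  rcases hx with rfl | hx
  · rcases hy with rfl | hy
    · exact absurd rfl hxy
    · exact key _ _ hy
  · rcases hy with rfl | hy
    · exact key _ _ hx.symm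
    by_cases hadj : G.Adj x y
    · exact key _ _ hadj
    · -- distance is 2
      have hd2 : G.dist x y = 2 := by
        let w : G.Walk x y := .cons hx.symm (.cons hy .nil)
        have hle : G.dist x y ≤ 2 := by
          have h := SimpleGraph.dist_le w
          simpa [w] using h
        have hne0 : G.dist x y ≠ 0 := by
          have hr : G.Reachable x y := ⟨w⟩
          exact (hr.pos_dist_of_ne hxy).ne'
        have hne1 : G.dist x y ≠ 1 := by
          intro h
          exact hadj (SimpleGraph.dist_eq_one_iff_adj.mp h)
        omega
      intro heq
      have := hf.2 x y hd2
      rw [heq] at this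
      simp at this

/-- A major vertex has label 0 or Δ+1. -/
lemma major_label {V : Type*} [Fintype V] [DecidableEq V]
    (G : SimpleGraph V) [DecidableRel G.Adj]
    (hΔ : 2 ≤ G.maxDegree)
    (f : V → ℕ) (hf : IsL21Labeling G f) (hb : ∀ v, f v ≤ G.maxDegree + 1)
    {u : V} (hu : G.degree u = G.maxDegree) :
    f u = 0 ∨ f u = G.maxDegree + 1 := by
  by_contra h
  push_neg at h
  obtain ⟨h0, h1⟩ := h
  have hfu1 : 1 ≤ f u := Nat.one_le_iff_ne_zero.mpr h0
  have hfuΔ : f u ≤ G.maxDegree := by have := hb u; omega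
  -- labels of neighbors are injective and avoid {f u - 1, f u, f u + 1}
  set Δ := G.maxDegree with hΔdef
  have hinj : Set.InjOn f (G.neighborFinset u : Set V) := by
    intro a ha b hb' hab
    by_contra hne
    exact labels_ne G f hf (Or.inr (by simpa using ha)) (Or.inr (by simpa using hb')) hne hab
  have himg : (G.neighborFinset u).image f ⊆
      ((((Finset.range (Δ + 2)).erase (f u - 1)).erase (f u)).erase (f u + 1)) := by
    intro n hn
    simp only [Finset.mem_image] at hn
    obtain ⟨a, ha, rfl⟩ := hn
    have hadj : G.Adj u a := by simpa using ha
    have h2 := hf.1 u a hadj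
    have hba := hb a
    simp only [Finset.mem_erase, Finset.mem_range]
    rcases le_abs.mp h2 with h2' | h2' <;>
      refine ⟨?_, ?_, ?_, ?_⟩ <;> omega
  have hcard1 : (G.neighborFinset u).card = ((G.neighborFinset u).image f).card :=
    (Finset.card_image_of_injOn hinj).symm
  have hcard2 : (((((Finset.range (Δ + 2)).erase (f u - 1)).erase (f u)).erase (f u + 1))).card
      = Δ - 1 := by
    rw [Finset.card_erase_of_mem, Finset.card_erase_of_mem, Finset.card_erase_of_mem]
    · simp
    · simp only [Finset.mem_range]; omega
    · simp only [Finset.mem_erase, Finset.mem_range]; omega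
    · simp only [Finset.mem_erase, Finset.mem_range]; omega
  have hdeg : (G.neighborFinset u).card = Δ := by
    rw [← SimpleGraph.card_neighborFinset_eq_degree] at hu; exact hu
  have := Finset.card_le_card himg
  omega

theorem stmt2 {V : Type*} [Fintype V] [DecidableEq V]
    (G : SimpleGraph V) [DecidableRel G.Adj]
    (hΔ : 2 ≤ G.maxDegree)
    (f : V → ℕ) (hf : IsL21Labeling G f) (hb : ∀ v, f v ≤ G.maxDegree + 1)
    (v : V) :
    ((insert v (G.neighborFinset v)).filter
      (fun u => G.degree u = G.maxDegree)).card ≤ 2 := by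
  set T := (insert v (G.neighborFinset v)).filter (fun u => G.degree u = G.maxDegree) with hT
  have hinj : Set.InjOn f (T : Set V) := by
    intro a ha b hb' hab
    by_contra hne
    simp only [hT, Finset.coe_filter, Set.mem_setOf_eq, Finset.mem_insert,
      SimpleGraph.mem_neighborFinset] at ha hb'
    exact labels_ne G f hf ha.1 hb'.1 hne hab
  have himg : T.image f ⊆ {0, G.maxDegree + 1} := by
    intro n hn
    simp only [Finset.mem_image] at hn
    obtain ⟨a, ha, rfl⟩ := hn
    have hmaj : G.degree a = G.maxDegree := (Finset.mem_filter.mp ha).2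
    have := major_label G hΔ f hf hb hmaj
    simp only [Finset.mem_insert, Finset.mem_singleton]
    tauto
  calc T.card = (T.image f).card := (Finset.card_image_of_injOn hinj).symm
    _ ≤ ({0, G.maxDegree + 1} : Finset ℕ).card := Finset.card_le_card himg
    _ ≤ 2 := Finset.card_insert_le _ _ |>.trans (by simp)
end

section
/- Every tree T with maximum degree Δ ≥ 1 satisfies λ_{2,1}(T) ≤ Δ + 2; that is, T admits an L(2,1)-labeling using only labels in {0, 1, …, Δ+2}. -/
/-!
Delete a leaf `L` of the tree, with neighbour `p`, and label the rest by induction. The label of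
`L` only has to avoid `f p - 1`, `f p`, `f p + 1` and the labels of the at most `Δ - 1` other
neighbours of `p`, so one of the `Δ + 3` labels `0, …, Δ + 2` is still free.
-/

open Finset

lemma Nat.two_le_abs_sub_of_notMem_Icc {a b : ℕ} (h : a ∉ Icc (b - 1) (b + 1)) :
    2 ≤ |(a : ℤ) - b| := by
  rw [Finset.mem_Icc] at h
  rw [le_abs]
  omega

namespace SimpleGraph

variable {V : Type*} {G : SimpleGraph V}

lemma degree_induce_le (s : Set V) (v : s) [Fintype ((G.induce s).neighborSet v)]
    [Fintype (G.neighborSet v)] : (G.induce s).degree v ≤ G.degree v := by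
  simp only [← card_neighborSet_eq_degree]
  exact Fintype.card_le_of_injective (fun w => ⟨w.1.1, w.2⟩)
    fun _ _ h => by simpa [Subtype.ext_iff] using h

variable (G) in
/-- The distance-two condition is phrased through a common neighbour, so that it passes to induced
subgraphs (where distances can grow). -/
def IsLocalL21Labeling (f : V → ℕ) : Prop :=
  (∀ x y, G.Adj x y → 2 ≤ |(f x : ℤ) - (f y : ℤ)|) ∧
  ∀ x y w, x ≠ y → G.Adj x w → G.Adj y w → f x ≠ f y

lemma IsLocalL21Labeling.isL21Labeling {f : V → ℕ} (hf : G.IsLocalL21Labeling f) :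
    IsL21Labeling G f := by
  refine ⟨hf.1, fun x y hxy => ?_⟩
  have hedist : G.edist x y = 2 := by
    rw [← (Reachable.of_dist_ne_zero (by omega)).coe_dist_eq_edist, hxy]
    rfl
  obtain ⟨hne, -, w, hw⟩ := edist_eq_two_iff.mp hedist
  rw [mem_commonNeighbors] at hw
  exact Int.one_le_abs (sub_ne_zero.mpr (by exact_mod_cast hf.2 x y w hne hw.1 hw.2))

lemma IsLocalL21Labeling.of_subsingleton [Subsingleton V] (f : V → ℕ) :
    G.IsLocalL21Labeling f :=
  ⟨fun x y hxy => (G.ne_of_adj hxy (Subsingleton.elim x y)).elim,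
    fun x y _ hxy => (hxy (Subsingleton.elim x y)).elim⟩

lemma IsLocalL21Labeling.update_leaf [DecidableEq V] {L p : V} {f : V → ℕ} {c : ℕ}
    (hf : (G.induce {L}ᶜ).IsLocalL21Labeling (fun v => f v))
    (hL : ∀ w, G.Adj L w → w = p)
    (hcp : c ∉ Icc (f p - 1) (f p + 1))
    (hcsib : ∀ u, G.Adj p u → u ≠ L → c ≠ f u) :
    G.IsLocalL21Labeling (Function.update f L c) := by
  have hupd : ∀ v, v ≠ L → Function.update f L c v = f v :=
    fun v hv => Function.update_of_ne hv c f
  refine ⟨fun x y hxy => ?_, fun x y w hxy hxw hyw => ?_⟩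
  · by_cases hx : x = L
    · subst x
      obtain rfl := hL y hxy
      rw [Function.update_self, hupd _ (G.ne_of_adj hxy).symm]
      exact Nat.two_le_abs_sub_of_notMem_Icc hcp
    by_cases hy : y = L
    · subst y
      obtain rfl := hL x hxy.symm
      rw [Function.update_self, hupd _ (G.ne_of_adj hxy), abs_sub_comm]
      exact Nat.two_le_abs_sub_of_notMem_Icc hcp
    rw [hupd x hx, hupd y hy]
    exact hf.1 ⟨x, hx⟩ ⟨y, hy⟩ hxy
  · by_cases hx : x = L
    · subst x
      have hy : y ≠ L := Ne.symm hxy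
      rw [Function.update_self, hupd y hy]
      exact hcsib y (hL w hxw ▸ hyw.symm) hy
    by_cases hy : y = L
    · subst y
      rw [Function.update_self, hupd x hx]
      exact (hcsib x (hL w hyw ▸ hxw.symm) hx).symm
    have hw : w ≠ L := fun hw =>
      hxy ((hL x (hw ▸ hxw.symm)).trans (hL y (hw ▸ hyw.symm)).symm)
    rw [hupd x hx, hupd y hy]
    exact hf.2 ⟨x, hx⟩ ⟨y, hy⟩ ⟨w, hw⟩ (fun h => hxy (congrArg Subtype.val h)) hxw hyw

lemma exists_label_for_leaf [DecidableEq V] {L p : V} [Fintype (G.neighborSet p)]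
    (hLp : G.Adj L p) {Δ : ℕ} (hp : G.degree p ≤ Δ) (f : V → ℕ) :
    ∃ c ≤ Δ + 2, c ∉ Icc (f p - 1) (f p + 1) ∧ ∀ u, G.Adj p u → u ≠ L → c ≠ f u := by
  set siblings := (G.neighborFinset p).erase L
  have hsiblings : #siblings + 1 = G.degree p :=
    card_erase_add_one ((G.mem_neighborFinset p L).mpr hLp.symm)
  have hF : #(Icc (f p - 1) (f p + 1) ∪ siblings.image f) < #(range (Δ + 3)) :=
    calc
      _ ≤ #(Icc (f p - 1) (f p + 1)) + #(siblings.image f) := card_union_le _ _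
      _ ≤ 3 + #siblings := by
          gcongr
          · rw [Nat.card_Icc]; omega
          · exact card_image_le
      _ < #(range (Δ + 3)) := by rw [card_range]; omega
  obtain ⟨c, hc, hcF⟩ := exists_mem_notMem_of_card_lt_card hF
  refine ⟨c, Nat.lt_succ_iff.mp (mem_range.mp hc), fun h => hcF (mem_union_left _ h),
    fun u hpu huL h => hcF (mem_union_right _ ?_)⟩
  exact mem_image.mpr ⟨u, by simp [siblings, hpu, huL], h.symm⟩

theorem IsTree.exists_isLocalL21Labeling [Fintype V] [DecidableRel G.Adj] (hT : G.IsTree)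
    {Δ : ℕ} (hdeg : ∀ v, G.degree v ≤ Δ) :
    ∃ f : V → ℕ, G.IsLocalL21Labeling f ∧ ∀ v, f v ≤ Δ + 2 := by
  induction hn : Fintype.card V using Nat.strong_induction_on generalizing V with | _ n ih
  rcases subsingleton_or_nontrivial V with hV | hV
  · exact ⟨0, .of_subsingleton 0, fun _ => Nat.zero_le _⟩
  · classical
    obtain ⟨L, hL⟩ := hT.exists_vert_degree_one_of_nontrivial
    obtain ⟨p, hLp, hp⟩ := degree_eq_one_iff_existsUnique_adj.mp hL
    have hT' : (G.induce {L}ᶜ).IsTree :=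
      ⟨hT.connected.induce_compl_singleton_of_degree_eq_one hL, hT.isAcyclic.induce _⟩
    have hcard : Fintype.card ({L}ᶜ : Set V) < n :=
      hn ▸ Fintype.card_subtype_lt (p := (· ∈ ({L}ᶜ : Set V))) (x := L) (by simp)
    obtain ⟨f', hf', hf'le⟩ :=
      ih _ hcard hT' (fun v => (degree_induce_le _ v).trans (hdeg v)) rfl
    let f : V → ℕ := fun v => if h : v = L then 0 else f' ⟨v, h⟩
    have hff' : (fun v : ({L}ᶜ : Set V) => f v) = f' := funext fun v => dif_neg v.2
    obtain ⟨c, hc, hcp, hcsib⟩ := exists_label_for_leaf hLp (hdeg p) f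
    refine ⟨Function.update f L c, (hff' ▸ hf').update_leaf hp hcp hcsib, fun v => ?_⟩
    by_cases hv : v = L
    · simpa [hv] using hc
    · simpa [Function.update_of_ne hv, f, hv] using hf'le ⟨v, hv⟩

end SimpleGraph

theorem stmt4_general {V : Type*} [Fintype V] (G : SimpleGraph V) [DecidableRel G.Adj]
    (hT : G.IsTree) :
    ∃ f : V → ℕ, IsL21Labeling G f ∧ ∀ v, f v ≤ G.maxDegree + 2 := by
  obtain ⟨f, hf, hle⟩ := hT.exists_isLocalL21Labeling G.degree_le_maxDegree
  exact ⟨f, hf.isL21Labeling, hle⟩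

theorem stmt4 {V : Type*} [Fintype V] (G : SimpleGraph V) [DecidableRel G.Adj]
    (hT : G.IsTree) (hΔ : 1 ≤ G.maxDegree) :
    ∃ f : V → ℕ, IsL21Labeling G f ∧ ∀ v, f v ≤ G.maxDegree + 2 :=
  stmt4_general G hT
end

section
/- Let T be a tree with at least 2 vertices and maximum degree Δ, let p ≥ 2Δ, and let λ be any integer with Δ + p − 1 ≤ λ ≤ 2Δ + p − 2. Then in any λ-L(p,1)-labeling f of T, no vertex receives a label in {2Δ − 1, 2Δ, …, p − 1}. -/
def IsLp1Labeling {V : Type*} (G : SimpleGraph V) (p lam : ℕ) (f : V → ℕ) : Prop :=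
  (∀ v, f v ≤ lam) ∧
  (∀ x y, G.Adj x y → (p : ℤ) ≤ |(f x : ℤ) - (f y : ℤ)|) ∧
  (∀ x y, G.dist x y = 2 → 1 ≤ |(f x : ℤ) - (f y : ℤ)|)

theorem stmt7 {V : Type*} [Fintype V] (G : SimpleGraph V) [DecidableRel G.Adj]
    (hT : G.IsTree) (hcard : 2 ≤ Fintype.card V)
    (p lam : ℕ) (hp : 2 * G.maxDegree ≤ p)
    (hlam1 : G.maxDegree + p - 1 ≤ lam) (hlam2 : lam ≤ 2 * G.maxDegree + p - 2)
    (f : V → ℕ) (hf : IsLp1Labeling G p lam f) (v : V) :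
    ¬ (2 * G.maxDegree - 1 ≤ f v ∧ f v ≤ p - 1) := by
  rintro ⟨h1, h2⟩
  -- find a neighbor of v
  have : Nontrivial V := Fintype.one_lt_card_iff_nontrivial.mp hcard
  obtain ⟨w, hw⟩ := exists_ne v
  obtain ⟨pw⟩ := hT.isConnected.preconnected v w
  have hadj : G.Adj v (pw.getVert 1) :=
    SimpleGraph.Walk.adj_snd (SimpleGraph.Walk.not_nil_of_ne (Ne.symm hw))
  set u := pw.getVert 1
  -- max degree ≥ 1
  have hdeg : 1 ≤ G.maxDegree := by
    have : 0 < G.degree v := (G.degree_pos_iff_exists_adj v).mpr ⟨u, hadj⟩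
    exact this.trans_le (G.degree_le_maxDegree v)
  obtain ⟨hb, hd, _⟩ := hf
  have h3 := hd v u hadj
  have h4 := hb u
  have h5 : 2 * G.maxDegree - 1 + 1 = 2 * G.maxDegree := by omega
  -- work in ℤ
  have hfv : (f v : ℤ) ≤ (p : ℤ) - 1 := by
    have : f v ≤ p - 1 := h2
    omega
  have hfv2 : (2 * G.maxDegree : ℤ) - 1 ≤ f v := by
    have := h1; push_cast; omega
  have hfu : (f u : ℤ) ≤ (lam : ℤ) := by exact_mod_cast h4
  have hlam2' : (lam : ℤ) ≤ 2 * G.maxDegree + p - 2 := by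
    have := hlam2; have := hp; push_cast; omega
  have habs := hd v u hadj
  rcases abs_cases ((f v : ℤ) - f u) with ⟨he, _⟩ | ⟨he, _⟩ <;> rw [he] at habs <;> omega
end

section
/- Let G = (A, X, E) be a finite bipartite graph with a matching M saturating A. For a vertex i ∈ X, there exists a matching M' of G saturating A that leaves i unmatched if and only if i is unmatched by M or i is reachable by an M-alternating path starting from some vertex of X unmatched by M. -/
/-!
An alternating-closed `T` inside the range of `m` is covered by every matching saturating `A`:
that matching maps `m⁻¹(T)`, which has `|T|` elements, injectively into `T`. Taking for `T`
the set of vertices from which `i` is reachable gives one direction. Conversely, if no matching saturating `A` avoids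
`i`, Hall's condition fails in `G - i` for some `B ⊆ A`; counting forces `N(B) = m(B) ∋ i`, and
`m(B)` is alternating-closed, so every vertex reaching `i` is matched.
-/

open Function Finset

/-- One step of an `M`-alternating path: along the non-matching edge `x — a`, then back along the
matching edge `a — m a`. -/
def AlternatingStep {A X : Type*} (E : A → X → Prop) (m : A → X) (x y : X) : Prop :=
  ∃ a, E a x ∧ m a = y

def IsAlternatingClosed {A X : Type*} (E : A → X → Prop) (m : A → X) (T : Set X) : Prop :=
  ∀ x y, AlternatingStep E m x y → y ∈ T → x ∈ T

theorem Relation.ReflTransGen.mem_of_mem_of_closed {α : Type*} {r : α → α → Prop} {T : Set α}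
    (hT : ∀ x y, r x y → y ∈ T → x ∈ T) {x y : α} (h : Relation.ReflTransGen r x y)
    (hy : y ∈ T) : x ∈ T := by
  induction h using Relation.ReflTransGen.head_induction_on with
  | refl => exact hy
  | head hxz _ ih => exact hT _ _ hxz ih

section Matching

variable {A X : Type*} {E : A → X → Prop} {m : A → X}

theorem IsAlternatingClosed.subset_range (hm : Injective m) {T : Set X} (hTfin : T.Finite)
    (hTm : T ⊆ Set.range m) (hT : IsAlternatingClosed E m T)
    {m' : A → X} (hm' : Injective m') (hme' : ∀ a, E a (m' a)) : T ⊆ Set.range m' := by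
  set B := m ⁻¹' T
  have hmB : m '' B = T := Set.image_preimage_eq_of_subset hTm
  have hm'B : m' '' B ⊆ T := by
    rintro _ ⟨a, ha, rfl⟩
    exact hT _ _ ⟨a, hme' a, rfl⟩ ha
  have hcard : T.ncard ≤ (m' '' B).ncard := by
    rw [← hmB, Set.ncard_image_of_injective _ hm, Set.ncard_image_of_injective _ hm']
  rw [← Set.eq_of_subset_of_ncard_le hm'B hcard hTfin]
  exact Set.image_subset_range _ _

theorem exists_isAlternatingClosed_of_forall_mem_range [Fintype X] (hm : Injective m)
    (hme : ∀ a, E a (m a)) {i : X}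
    (hi : ∀ m' : A → X, Injective m' → (∀ a, E a (m' a)) → i ∈ Set.range m') :
    ∃ T : Set X, i ∈ T ∧ T ⊆ Set.range m ∧ IsAlternatingClosed E m T := by
  classical
  obtain ⟨B, hB⟩ : ∃ B : Finset A, #{x | ∃ a ∈ B, E a x ∧ x ≠ i} < #B := by
    by_contra! hHall
    obtain ⟨m', hm', hm'E⟩ :=
      (Fintype.all_card_le_filter_rel_iff_exists_injective (fun a x => E a x ∧ x ≠ i)).1 hHall
    obtain ⟨a, ha⟩ := hi m' hm' fun a => (hm'E a).1
    exact (hm'E a).2 ha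
  set F : Finset X := {x | ∃ a ∈ B, E a x ∧ x ≠ i}
  set N : Finset X := {x | ∃ a ∈ B, E a x}
  have hmN : B.image m ⊆ N := by
    intro x hx
    obtain ⟨a, ha, rfl⟩ := mem_image.1 hx
    simpa [N] using ⟨a, ha, hme a⟩
  have hNi : N ⊆ insert i F := by
    intro x hx
    by_cases hxi : x = i <;> simp_all [N, F]
  have hN : B.image m = N := by
    refine eq_of_subset_of_card_le hmN ?_
    calc #N ≤ #F + 1 := (card_le_card hNi).trans (card_insert_le _ _)
      _ ≤ #B := hB
      _ = #(B.image m) := (card_image_of_injective B hm).symm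
  refine ⟨B.image m, ?_, by simp, ?_⟩
  · by_contra hiB
    have hmF : B.image m ⊆ F := fun x hx => by
      obtain ⟨a, ha, rfl⟩ := mem_image.1 hx
      simp only [F, mem_filter, mem_univ, true_and]
      refine ⟨a, ha, hme a, fun h => hiB ?_⟩
      rw [← h]
      exact mem_coe.2 (mem_image_of_mem m ha)
    exact (card_le_card hmF).not_gt (by rwa [card_image_of_injective B hm])
  · rintro x _ ⟨a, hax, rfl⟩ ha
    rw [coe_image, hm.mem_set_image] at ha
    simpa [hN, N] using ⟨a, ha, hax⟩

end Matching

theorem stmt15_general {A X : Type*} [Fintype X] (E : A → X → Prop)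
    (m : A → X) (hm : Function.Injective m) (hme : ∀ a, E a (m a)) (i : X) :
    (∃ m' : A → X, Function.Injective m' ∧ (∀ a, E a (m' a)) ∧ i ∉ Set.range m')
      ↔ (i ∉ Set.range m ∨
          ∃ x₀, x₀ ∉ Set.range m ∧
            Relation.ReflTransGen (fun x y => ∃ a, E a x ∧ m a = y) x₀ i) := by
  constructor
  · rintro ⟨m', hm', hme', hi⟩
    by_contra! ⟨-, hunreach⟩
    have hT : {x | Relation.ReflTransGen (AlternatingStep E m) x i} ⊆ Set.range m' :=
      IsAlternatingClosed.subset_range hm (Set.toFinite _)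
        (fun x hx => not_not.1 fun hxm => hunreach x hxm hx)
        (fun _ _ => .head)
        hm' hme'
    exact hi (hT Relation.ReflTransGen.refl)
  · rintro (hi | ⟨x₀, hx₀, hpath⟩)
    · exact ⟨m, hm, hme, hi⟩
    · by_contra! hcover
      obtain ⟨T, hiT, hTm, hT⟩ := exists_isAlternatingClosed_of_forall_mem_range hm hme hcover
      exact hx₀ (hTm (hpath.mem_of_mem_of_closed hT hiT))

theorem stmt15 {A X : Type*} [Fintype A] [Fintype X] (E : A → X → Prop)
    (m : A → X) (hm : Function.Injective m) (hme : ∀ a, E a (m a)) (i : X) :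
    (∃ m' : A → X, Function.Injective m' ∧ (∀ a, E a (m' a)) ∧ i ∉ Set.range m')
      ↔ (i ∉ Set.range m ∨
          ∃ x₀, x₀ ∉ Set.range m ∧
            Relation.ReflTransGen (fun x y => ∃ a, E a x ∧ m a = y) x₀ i) :=
  stmt15_general E m hm hme i
end
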